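/- Let W be a nonempty set of edges and h a pairwise-independent uniform hash function from edge names to [1, 2^ℓ] with 2^ℓ ≥ 4|W|. For i = ℓ − ⌈log₂|W|⌉ − 2, the probability that exactly one edge of W hashes into the range [1, 2^i] is at least 1/16. -/

import Mathlib

/-!
Let `A e = {h e ≤ 2^i}`. Uniformity gives `μ (A e) = p := 2^i / 2^ℓ`, and pairwise independence
gives `μ (A e ∩ A e') ≤ p²` for `e ≠ e'`. The sets `A e \ ⋃_{e' ≠ e} A e'` are disjoint and lie in
the target event, so with `N = |W|` the target has probability at least `N p - (N p)²`. The choice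
of `i` puts `N p` in `[1/8, 1/4]`, where `x - x² ≥ 1/16`.

The hash values are not assumed measurable; the level sets `{h e = t}` are null-measurable anyway,
because their outer measures add up to `1`.
-/

open MeasureTheory ProbabilityTheory

open scoped ENNReal

theorem setOf_le_eq_setOf_mem_Icc {Ω : Type*} {f : Ω → ℕ} {n : ℕ} (m : ℕ)
    (hf : ∀ ω, f ω ∈ Finset.Icc 1 n) : {ω | f ω ≤ m} = {ω | f ω ∈ Finset.Icc 1 m} := by
  ext ω
  simp [(Finset.mem_Icc.mp (hf ω)).1]

theorem Nat.pow_clog_lt_mul {b N : ℕ} (hb : 1 < b) (hN : 0 < N) : b ^ Nat.clog b N < b * N := by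
  rcases (Nat.succ_le_of_lt hN).eq_or_lt with rfl | hN1
  · simpa using hb
  · have hpos := Nat.clog_pos hb hN1
    calc b ^ Nat.clog b N = b * b ^ (Nat.clog b N - 1) := by
          rw [← pow_succ']
          congr 1
          omega
      _ < b * N := Nat.mul_lt_mul_of_pos_left (Nat.pow_pred_clog_lt_self hb hN1) (by omega)

theorem exists_two_zpow_sub_ceil_logb_eq_natCast {N ℓ : ℕ} (hN : 0 < N) (hbig : 4 * N ≤ 2 ^ ℓ) :
    ∃ m : ℕ, (2 : ℝ) ^ ((ℓ : ℤ) - ⌈Real.logb 2 (N : ℝ)⌉ - 2) = m ∧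
      4 * N * m ≤ 2 ^ ℓ ∧ 2 ^ ℓ ≤ 8 * N * m := by
  set k := Nat.clog 2 N
  have hceil : ⌈Real.logb 2 (N : ℝ)⌉ = k := by
    exact_mod_cast Real.ceil_logb_natCast (b := 2) (Nat.cast_nonneg N)
  have hkℓ : k + 2 ≤ ℓ := by
    have hℓ : 2 ≤ ℓ := by
      by_contra! hℓ
      interval_cases ℓ <;> omega
    have hN_le : N ≤ 2 ^ (ℓ - 2) := by
      rw [← Nat.sub_add_cancel hℓ, pow_add] at hbig
      omega
    have := Nat.clog_le_of_le_pow hN_le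
    omega
  refine ⟨2 ^ (ℓ - (k + 2)), ?_, ?_⟩
  · rw [hceil, show (ℓ : ℤ) - k - 2 = (ℓ - (k + 2) : ℕ) by omega, zpow_natCast]
    push_cast
    rfl
  · have hpow : 2 ^ ℓ = 4 * 2 ^ k * 2 ^ (ℓ - (k + 2)) := by
      rw [show 4 * 2 ^ k = 2 ^ (k + 2) by ring, ← pow_add]
      congr 1
      omega
    have hlow := Nat.le_pow_clog one_lt_two N
    have hhigh := Nat.pow_clog_lt_mul one_lt_two hN
    constructor <;> rw [hpow] <;> nlinarith

theorem ENNReal.one_div_sixteen_add_div_sq_le {a b : ℕ} (hb : b ≠ 0) (h4 : 4 * a ≤ b)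
    (h8 : b ≤ 8 * a) : 1 / 16 + ((a : ℝ≥0∞) / b) ^ 2 ≤ a / b := by
  have hb' : (0 : ℝ) < b := by positivity
  have h4' : 4 * (a : ℝ) ≤ b := by exact_mod_cast h4
  have h8' : (b : ℝ) ≤ 8 * a := by exact_mod_cast h8
  have hreal : 1 / 16 + ((a : ℝ) / b) ^ 2 ≤ a / b := by
    rw [div_pow, div_add_div _ _ (by norm_num) (by positivity),
      div_le_div_iff₀ (by positivity) hb']
    nlinarith [mul_nonneg (mul_nonneg (sub_nonneg.2 h4') (sub_nonneg.2 h8')) hb'.le]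
  have hofReal : (a : ℝ≥0∞) / b = ENNReal.ofReal (a / b) := by
    rw [ENNReal.ofReal_div_of_pos hb', ENNReal.ofReal_natCast, ENNReal.ofReal_natCast]
  have hsixteenth : (1 / 16 : ℝ≥0∞) = ENNReal.ofReal (1 / 16) := by
    rw [ENNReal.ofReal_div_of_pos (by norm_num)]
    simp
  rw [hofReal, ← ENNReal.ofReal_pow (by positivity), hsixteenth,
    ← ENNReal.ofReal_add (by norm_num) (by positivity)]
  exact ENNReal.ofReal_le_ofReal hreal

namespace MeasureTheory

variable {Ω : Type*} [MeasurableSpace Ω] {μ : Measure Ω}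

theorem nullMeasurableSet_of_measure_add_measure_compl_le [IsFiniteMeasure μ] {s : Set Ω}
    (hs : μ s + μ sᶜ ≤ μ Set.univ) : NullMeasurableSet s μ := by
  set B := toMeasurable μ s
  set C := toMeasurable μ sᶜ
  have hBC : B ∪ C = Set.univ :=
    Set.univ_subset_iff.mp <| Set.union_compl_self s ▸
      Set.union_subset_union (subset_toMeasurable μ s) (subset_toMeasurable μ sᶜ)
  have hinter : μ (B ∩ C) = 0 := by
    have h := measure_union_add_inter (μ := μ) B (measurableSet_toMeasurable μ sᶜ)
    rw [hBC, measure_toMeasurable, measure_toMeasurable] at h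
    refine nonpos_iff_eq_zero.mp (ENNReal.le_of_add_le_add_left (measure_ne_top μ Set.univ) ?_)
    rw [h, add_zero]
    exact hs
  refine (measurableSet_toMeasurable μ s).nullMeasurableSet.congr (ae_eq_set.mpr (And.intro ?_ ?_))
  · refine measure_mono_null (fun ω hω => ?_) hinter
    exact ⟨hω.1, subset_toMeasurable μ sᶜ hω.2⟩
  · rw [Set.sdiff_eq_empty.mpr (subset_toMeasurable μ s), measure_empty]

theorem nullMeasurableSet_level_of_sum_le [IsFiniteMeasure μ] {β : Type*} [DecidableEq β]
    {f : Ω → β} {T : Finset β} (hf : ∀ ω, f ω ∈ T)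
    (hsum : ∑ t ∈ T, μ {ω | f ω = t} ≤ μ Set.univ) (t : β) :
    NullMeasurableSet {ω | f ω = t} μ := by
  by_cases ht : t ∈ T
  · refine nullMeasurableSet_of_measure_add_measure_compl_le (le_trans ?_ hsum)
    rw [← Finset.add_sum_erase T _ ht]
    gcongr
    refine (measure_mono fun ω (hω : f ω ≠ t) => ?_).trans (measure_biUnion_finset_le _ _)
    exact Set.mem_biUnion (Finset.mem_erase.mpr ⟨hω, hf ω⟩) rfl
  · convert nullMeasurableSet_empty (μ := μ)
    exact Set.eq_empty_of_forall_notMem fun ω (hω : f ω = t) => ht (hω ▸ hf ω)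

theorem nullMeasurableSet_setOf_mem_finset {β : Type*} {f : Ω → β} (T : Finset β)
    (hf : ∀ t ∈ T, NullMeasurableSet {ω | f ω = t} μ) :
    NullMeasurableSet {ω | f ω ∈ T} μ := by
  convert Finset.nullMeasurableSet_biUnion T hf using 1
  exact (Finset.set_biUnion_preimage_singleton f T).symm

theorem measure_setOf_mem_finset {β : Type*} {f : Ω → β} (T : Finset β)
    (hf : ∀ t ∈ T, NullMeasurableSet {ω | f ω = t} μ) :
    μ {ω | f ω ∈ T} = ∑ t ∈ T, μ {ω | f ω = t} := by
  rw [← measure_biUnion_finset₀ _ hf]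
  · exact congrArg μ (Finset.set_biUnion_preimage_singleton f T).symm
  · exact fun s _ t _ hst => Disjoint.aedisjoint <|
      Set.disjoint_left.mpr fun ω (hs : f ω = s) (ht : f ω = t) => hst (hs ▸ ht)

theorem measure_setOf_mem_inter_le_sum_mul_sum {β : Type*} {f g : Ω → β} (T T' : Finset β)
    (hindep : ∀ s t, μ ({ω | f ω = s} ∩ {ω | g ω = t}) = μ {ω | f ω = s} * μ {ω | g ω = t}) :
    μ ({ω | f ω ∈ T} ∩ {ω | g ω ∈ T'}) ≤
      (∑ s ∈ T, μ {ω | f ω = s}) * ∑ t ∈ T', μ {ω | g ω = t} := by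
  have hcover : {ω | f ω ∈ T} ∩ {ω | g ω ∈ T'} ⊆
      ⋃ s ∈ T, ⋃ t ∈ T', {ω | f ω = s} ∩ {ω | g ω = t} := by
    rintro ω ⟨hs, ht⟩
    exact Set.mem_biUnion hs (Set.mem_biUnion ht ⟨rfl, rfl⟩)
  calc μ ({ω | f ω ∈ T} ∩ {ω | g ω ∈ T'})
      ≤ ∑ s ∈ T, μ (⋃ t ∈ T', {ω | f ω = s} ∩ {ω | g ω = t}) :=
        (measure_mono hcover).trans (measure_biUnion_finset_le _ _)
    _ ≤ ∑ s ∈ T, ∑ t ∈ T', μ ({ω | f ω = s} ∩ {ω | g ω = t}) := by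
        gcongr
        exact measure_biUnion_finset_le _ _
    _ = _ := by simp_rw [hindep, Finset.sum_mul_sum]

theorem sum_measure_le_measure_existsUnique_add {ι : Type*} [DecidableEq ι] {W : Finset ι}
    {A : ι → Set Ω} (hA : ∀ e ∈ W, NullMeasurableSet (A e) μ) :
    ∑ e ∈ W, μ (A e) ≤
      μ {ω | ∃! e, e ∈ W ∧ ω ∈ A e} + ∑ e ∈ W, ∑ e' ∈ W.erase e, μ (A e ∩ A e') := by
  set B : ι → Set Ω := fun e => A e \ ⋃ e' ∈ W.erase e, A e'
  have hB_sub : ⋃ e ∈ W, B e ⊆ {ω | ∃! e, e ∈ W ∧ ω ∈ A e} := by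
    simp only [Set.iUnion_subset_iff]
    rintro e he ω ⟨hωe, hω⟩
    refine ⟨e, ⟨he, hωe⟩, fun e' ⟨he', hωe'⟩ => ?_⟩
    by_contra hne
    exact hω (Set.mem_biUnion (Finset.mem_erase.mpr ⟨hne, he'⟩) hωe')
  have hB_disj : Set.Pairwise (W : Set ι) (Function.onFun (AEDisjoint μ) B) := by
    refine fun e _ e' he' hne => Disjoint.aedisjoint (Set.disjoint_left.mpr ?_)
    rintro ω ⟨-, hω⟩ ⟨hωe', -⟩
    exact hω (Set.mem_biUnion (Finset.mem_erase.mpr ⟨hne.symm, he'⟩) hωe')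
  have hA_le : ∀ e, μ (A e) ≤ μ (B e) + ∑ e' ∈ W.erase e, μ (A e ∩ A e') := by
    intro e
    calc μ (A e) ≤ μ (B e) + μ (⋃ e' ∈ W.erase e, A e ∩ A e') := by
          rw [← Set.inter_iUnion₂, add_comm]
          exact measure_le_inter_add_sdiff μ _ _
      _ ≤ _ := by
          gcongr
          exact measure_biUnion_finset_le _ _
  calc ∑ e ∈ W, μ (A e) ≤ ∑ e ∈ W, (μ (B e) + ∑ e' ∈ W.erase e, μ (A e ∩ A e')) :=
        Finset.sum_le_sum fun e _ => hA_le e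
    _ = μ (⋃ e ∈ W, B e) + ∑ e ∈ W, ∑ e' ∈ W.erase e, μ (A e ∩ A e') := by
        rw [Finset.sum_add_distrib, measure_biUnion_finset₀ hB_disj fun e he =>
          (hA e he).diff (Finset.nullMeasurableSet_biUnion _ fun e' he' =>
            hA e' (Finset.mem_of_mem_erase he'))]
    _ ≤ _ := by gcongr

theorem card_mul_le_measure_existsUnique_add_sq {ι : Type*} [DecidableEq ι] {W : Finset ι}
    {A : ι → Set Ω} (hA : ∀ e ∈ W, NullMeasurableSet (A e) μ) {p : ℝ≥0∞}
    (hp : ∀ e ∈ W, μ (A e) = p) (hpair : ∀ e ∈ W, ∀ e' ∈ W, e ≠ e' → μ (A e ∩ A e') ≤ p ^ 2) :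
    W.card * p ≤ μ {ω | ∃! e, e ∈ W ∧ ω ∈ A e} + (W.card * p) ^ 2 := by
  have hinner : ∀ e ∈ W, ∑ e' ∈ W.erase e, μ (A e ∩ A e') ≤ W.card * p ^ 2 := fun e he =>
    calc ∑ e' ∈ W.erase e, μ (A e ∩ A e') ≤ (W.erase e).card • p ^ 2 :=
          Finset.sum_le_card_nsmul _ _ _ fun e' he' =>
            hpair e he e' (Finset.mem_of_mem_erase he') (Finset.ne_of_mem_erase he').symm
      _ ≤ W.card * p ^ 2 := by
          rw [nsmul_eq_mul]
          gcongr
          exact W.erase_subset e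
  calc (W.card : ℝ≥0∞) * p = ∑ e ∈ W, μ (A e) := by
        rw [Finset.sum_congr rfl hp, Finset.sum_const, nsmul_eq_mul]
    _ ≤ μ {ω | ∃! e, e ∈ W ∧ ω ∈ A e} + ∑ e ∈ W, ∑ e' ∈ W.erase e, μ (A e ∩ A e') :=
        sum_measure_le_measure_existsUnique_add hA
    _ ≤ μ {ω | ∃! e, e ∈ W ∧ ω ∈ A e} + ∑ _e ∈ W, (W.card : ℝ≥0∞) * p ^ 2 := by
        gcongr with e he
        exact hinner e he
    _ = μ {ω | ∃! e, e ∈ W ∧ ω ∈ A e} + (W.card * p) ^ 2 := by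
        rw [Finset.sum_const, nsmul_eq_mul]
        ring

structure IsUniformOnIcc (μ : Measure Ω) (f : Ω → ℕ) (n : ℕ) : Prop where
  mem_Icc : ∀ ω, f ω ∈ Finset.Icc 1 n
  measure_eq : ∀ t ∈ Finset.Icc 1 n, μ {ω | f ω = t} = 1 / n

namespace IsUniformOnIcc

variable {f g : Ω → ℕ} {n m : ℕ}

theorem nullMeasurableSet_level [IsProbabilityMeasure μ] (hf : IsUniformOnIcc μ f n) (t : ℕ) :
    NullMeasurableSet {ω | f ω = t} μ := by
  refine nullMeasurableSet_level_of_sum_le hf.mem_Icc ?_ t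
  rw [Finset.sum_congr rfl hf.measure_eq, Finset.sum_const, Nat.card_Icc, measure_univ,
    nsmul_eq_mul, Nat.add_sub_cancel]
  exact ENNReal.mul_div_le

theorem sum_measure_level (hf : IsUniformOnIcc μ f n) (hm : m ≤ n) :
    ∑ t ∈ Finset.Icc 1 m, μ {ω | f ω = t} = m / n := by
  rw [Finset.sum_congr rfl fun t ht => hf.measure_eq t (Finset.Icc_subset_Icc_right hm ht),
    Finset.sum_const, Nat.card_Icc, nsmul_eq_mul, Nat.add_sub_cancel, mul_one_div]

theorem nullMeasurableSet_setOf_le [IsProbabilityMeasure μ] (hf : IsUniformOnIcc μ f n) :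
    NullMeasurableSet {ω | f ω ≤ m} μ := by
  rw [setOf_le_eq_setOf_mem_Icc m hf.mem_Icc]
  exact nullMeasurableSet_setOf_mem_finset _ fun t _ => hf.nullMeasurableSet_level t

theorem measure_setOf_le [IsProbabilityMeasure μ] (hf : IsUniformOnIcc μ f n) (hm : m ≤ n) :
    μ {ω | f ω ≤ m} = m / n := by
  rw [setOf_le_eq_setOf_mem_Icc m hf.mem_Icc, measure_setOf_mem_finset _ fun t _ =>
    hf.nullMeasurableSet_level t, hf.sum_measure_level hm]

theorem measure_setOf_le_inter_le_sq (hf : IsUniformOnIcc μ f n) (hg : IsUniformOnIcc μ g n)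
    (hindep : ∀ s t, μ ({ω | f ω = s} ∩ {ω | g ω = t}) = μ {ω | f ω = s} * μ {ω | g ω = t})
    (hm : m ≤ n) :
    μ ({ω | f ω ≤ m} ∩ {ω | g ω ≤ m}) ≤ (m / n) ^ 2 := by
  rw [setOf_le_eq_setOf_mem_Icc m hf.mem_Icc, setOf_le_eq_setOf_mem_Icc m hg.mem_Icc, sq]
  refine (measure_setOf_mem_inter_le_sum_mul_sum _ _ hindep).trans_eq ?_
  rw [hf.sum_measure_level hm, hg.sum_measure_level hm]

theorem card_mul_le_measure_existsUnique_le_add_sq [IsProbabilityMeasure μ] {ι : Type*}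
    [DecidableEq ι] {h : ι → Ω → ℕ} (W : Finset ι) (hunif : ∀ e, IsUniformOnIcc μ (h e) n)
    (hpair : ∀ e e', e ≠ e' → ∀ s t : ℕ,
      μ ({ω | h e ω = s} ∩ {ω | h e' ω = t}) = μ {ω | h e ω = s} * μ {ω | h e' ω = t})
    (hm : m ≤ n) :
    W.card * (m / n : ℝ≥0∞) ≤ μ {ω | ∃! e, e ∈ W ∧ h e ω ≤ m} + (W.card * (m / n : ℝ≥0∞)) ^ 2 :=
  card_mul_le_measure_existsUnique_add_sq (A := fun e => {ω | h e ω ≤ m})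
    (fun e _ => (hunif e).nullMeasurableSet_setOf_le)
    (fun e _ => (hunif e).measure_setOf_le hm)
    (fun e _ e' _ hne => (hunif e).measure_setOf_le_inter_le_sq (hunif e') (hpair e e' hne) hm)

end IsUniformOnIcc

end MeasureTheory

/-- For a pairwise-independent uniform hash `h` of edge names into `[1, 2^ℓ]` with
`2^ℓ ≥ 4|W|` and `i = ℓ - ⌈log₂ |W|⌉ - 2`, the probability that exactly one edge of the
nonempty set `W` hashes into `[1, 2^i]` is at least `1/16`. -/
theorem stmt_7 {α : Type} [DecidableEq α] {Ω : Type} [MeasurableSpace Ω]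
    (μ : Measure Ω) [IsProbabilityMeasure μ]
    (ℓ : ℕ) (W : Finset α) (hW : W.Nonempty)
    (h : α → Ω → ℕ)
    (hrange : ∀ e ω, h e ω ∈ Finset.Icc 1 (2 ^ ℓ))
    (hunif : ∀ e, ∀ t ∈ Finset.Icc 1 (2 ^ ℓ),
      μ {ω | h e ω = t} = 1 / (2 : ENNReal) ^ ℓ)
    (hpair : ∀ e e', e ≠ e' → ∀ s t : ℕ,
      μ ({ω | h e ω = s} ∩ {ω | h e' ω = t}) =
        μ {ω | h e ω = s} * μ {ω | h e' ω = t})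
    (hbig : 4 * W.card ≤ 2 ^ ℓ)
    (i : ℤ) (hi : i = (ℓ : ℤ) - ⌈Real.logb 2 (W.card : ℝ)⌉ - 2) :
    1 / 16 ≤ μ {ω | ∃! e, e ∈ W ∧ (h e ω : ℝ) ≤ (2 : ℝ) ^ i} := by
  obtain ⟨m, h2i, hlow, hhigh⟩ := exists_two_zpow_sub_ceil_logb_eq_natCast hW.card_pos hbig
  have huniform : ∀ e, IsUniformOnIcc μ (h e) (2 ^ ℓ) := fun e =>
    ⟨hrange e, by exact_mod_cast hunif e⟩
  have hbound := IsUniformOnIcc.card_mul_le_measure_existsUnique_le_add_sq W huniform hpair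
    (m := m) (by nlinarith [hW.card_pos])
  rw [← mul_div_assoc, ← Nat.cast_mul] at hbound
  have harith := ENNReal.one_div_sixteen_add_div_sq_le (a := W.card * m) (b := 2 ^ ℓ)
    (by positivity) (by rwa [← mul_assoc]) (by rwa [← mul_assoc])
  have hfinite : ((W.card * m : ℕ) / (2 ^ ℓ : ℕ) : ℝ≥0∞) ^ 2 ≠ ⊤ :=
    ENNReal.pow_ne_top (ENNReal.div_ne_top (ENNReal.natCast_ne_top _) (by simp))
  simp_rw [hi, h2i, Nat.cast_le]
  exact ENNReal.le_of_add_le_add_right hfinite (harith.trans hbound)
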